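/- Let m, d ≥ 1, let W : Fin m → ℝ^d, let a : Fin m → ℝ with a_i ∈ {1, −1} for all i, let x_t ∈ ℝ^d, η ∈ ℝ, G ∈ ℝ, and define the updated weights W'_j := W_j + (η · a_j / √m) · G · 1{⟨W_j, x_t⟩ ≥ 0} • x_t. Set A := {j : a_j = 1}, B := {j : a_j = −1}, L(x, y) := (1/m)·⟨x,y⟩·Σ_{j ∈ A} 1{⟨W_j, y⟩ ≥ 0}·(1{⟨W'_j, x⟩ ≥ 0} − 1{⟨W_j, x⟩ ≥ 0}), and M(x, y) := (1/m)·⟨x,y⟩·Σ_{j ∈ B} 1{⟨W_j, y⟩ ≥ 0}·(1{⟨W'_j, x⟩ ≥ 0} − 1{⟨W_j, x⟩ ≥ 0}). Then for every x ∈ ℝ^d, η · ( H_W(x, x_t) + M(x, x_t) ) · G ≤ f(x; a, W') − f(x; a, W) ≤ η · ( H_W(x, x_t) + L(x, x_t) ) · G. -/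

import Mathlib

open RealInnerProductSpace

/-!
Write `u = ⟪W j, x⟫`, `v = ⟪W' j, x⟫` and `Δ = 𝟙(v ≥ 0) - 𝟙(u ≥ 0)`. Per neuron,
`max v 0 - max u 0 = (v - u) 𝟙(u ≥ 0) + v Δ`. Under the SGD step the first terms, weighted by
`a j / √m`, add up exactly to `η H_W(x, x_t) G`, because `(a j)² = 1`. The switching term obeys
`0 ≤ v Δ ≤ (v - u) Δ`, the second inequality since `u Δ ≤ 0`; weighted by `a j / √m` it therefore
lies between `0` and the `L`-summand when `a j = 1`, and between the `M`-summand and `0` when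
`a j = -1`.
-/

/-- The two-layer ReLU network `f(x; a, W) = (1/√m) ∑ i, a i * max(⟪W i, x⟫, 0)`. -/
noncomputable def twoLayer (m d : ℕ) (a : Fin m → ℝ)
    (W : Fin m → EuclideanSpace ℝ (Fin d)) (x : EuclideanSpace ℝ (Fin d)) : ℝ :=
  (1 / Real.sqrt m) * ∑ i, a i * max ⟪W i, x⟫ 0

/-- The empirical kernel of a two-layer ReLU network. -/
noncomputable def empKernel (m d : ℕ) (W : Fin m → EuclideanSpace ℝ (Fin d))
    (x y : EuclideanSpace ℝ (Fin d)) : ℝ :=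
  ⟪x, y⟫ * ((1 : ℝ) / m) *
    ∑ i, (if 0 ≤ ⟪W i, x⟫ then (1 : ℝ) else 0) * (if 0 ≤ ⟪W i, y⟫ then (1 : ℝ) else 0)

local notation "𝟙₊(" u ")" => if 0 ≤ u then (1 : ℝ) else 0

theorem max_zero_eq_mul_step (u : ℝ) : max u 0 = u * 𝟙₊(u) := by
  split_ifs with hu
  · simp [hu]
  · simp [(not_le.mp hu).le]

theorem max_zero_sub_max_zero (u v : ℝ) :
    max v 0 - max u 0 = (v - u) * 𝟙₊(u) + v * (𝟙₊(v) - 𝟙₊(u)) := by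
  rw [max_zero_eq_mul_step, max_zero_eq_mul_step]
  ring

theorem mul_step_sub_step_nonneg (u v : ℝ) : 0 ≤ v * (𝟙₊(v) - 𝟙₊(u)) := by
  split_ifs <;> nlinarith

theorem mul_step_sub_step_le (u v : ℝ) :
    v * (𝟙₊(v) - 𝟙₊(u)) ≤ (v - u) * (𝟙₊(v) - 𝟙₊(u)) := by
  split_ifs <;> nlinarith

open Finset

section Switching

variable {ι : Type*} [Fintype ι] [DecidableEq ι] (c u v : ι → ℝ)

theorem sum_mul_mul_step_sub_step_le (A : Finset ι) (hA : ∀ i ∈ A, 0 ≤ c i)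
    (hAc : ∀ i ∉ A, c i ≤ 0) :
    ∑ i, c i * v i * (𝟙₊(v i) - 𝟙₊(u i)) ≤
      ∑ i ∈ A, c i * (v i - u i) * (𝟙₊(v i) - 𝟙₊(u i)) := by
  rw [← sum_add_sum_compl A]
  have hin : ∑ i ∈ A, c i * v i * (𝟙₊(v i) - 𝟙₊(u i)) ≤
      ∑ i ∈ A, c i * (v i - u i) * (𝟙₊(v i) - 𝟙₊(u i)) :=
    sum_le_sum fun i hi => by
      simpa only [mul_assoc] using
        mul_le_mul_of_nonneg_left (mul_step_sub_step_le (u i) (v i)) (hA i hi)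
  have hout : ∑ i ∈ Aᶜ, c i * v i * (𝟙₊(v i) - 𝟙₊(u i)) ≤ 0 :=
    sum_nonpos fun i hi => by
      simpa only [mul_assoc] using mul_nonpos_of_nonpos_of_nonneg
        (hAc i (mem_compl.mp hi)) (mul_step_sub_step_nonneg (u i) (v i))
  linarith

theorem le_sum_mul_mul_step_sub_step (B : Finset ι) (hB : ∀ i ∈ B, c i ≤ 0)
    (hBc : ∀ i ∉ B, 0 ≤ c i) :
    ∑ i ∈ B, c i * (v i - u i) * (𝟙₊(v i) - 𝟙₊(u i)) ≤
      ∑ i, c i * v i * (𝟙₊(v i) - 𝟙₊(u i)) := by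
  rw [← sum_add_sum_compl B]
  have hin : ∑ i ∈ B, c i * (v i - u i) * (𝟙₊(v i) - 𝟙₊(u i)) ≤
      ∑ i ∈ B, c i * v i * (𝟙₊(v i) - 𝟙₊(u i)) :=
    sum_le_sum fun i hi => by
      simpa only [mul_assoc] using
        mul_le_mul_of_nonpos_left (mul_step_sub_step_le (u i) (v i)) (hB i hi)
  have hout : 0 ≤ ∑ i ∈ Bᶜ, c i * v i * (𝟙₊(v i) - 𝟙₊(u i)) :=
    sum_nonneg fun i hi => by
      simpa only [mul_assoc] using mul_nonneg
        (hBc i (mem_compl.mp hi)) (mul_step_sub_step_nonneg (u i) (v i))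
  linarith

end Switching

theorem twoLayer_sub_twoLayer {m d : ℕ} (a : Fin m → ℝ) (W W' : Fin m → EuclideanSpace ℝ (Fin d))
    (x : EuclideanSpace ℝ (Fin d)) :
    twoLayer m d a W' x - twoLayer m d a W x =
      ∑ j, a j / √m * (⟪W' j, x⟫ - ⟪W j, x⟫) * 𝟙₊(⟪W j, x⟫) +
        ∑ j, a j / √m * ⟪W' j, x⟫ * (𝟙₊(⟪W' j, x⟫) - 𝟙₊(⟪W j, x⟫)) := by
  rw [twoLayer, twoLayer, ← mul_sub, ← sum_sub_distrib, mul_sum, ← sum_add_distrib]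
  refine sum_congr rfl fun j _ => ?_
  rw [← mul_sub, max_zero_sub_max_zero]
  ring

theorem div_sqrt_mul_inner_sub_of_eq_add_smul {E : Type*} [NormedAddCommGroup E]
    [InnerProductSpace ℝ E] {m : ℕ} {a η G b : ℝ} {w w' x xt : E} (ha : a = 1 ∨ a = -1)
    (hw' : w' = w + (η * a / √m * G * b) • xt) :
    a / √m * (⟪w', x⟫ - ⟪w, x⟫) = η * G / m * ⟪x, xt⟫ * b := by
  have ha2 : a * a = 1 := by rcases ha with rfl | rfl <;> norm_num
  rw [hw', inner_add_left, real_inner_smul_left, real_inner_comm x xt, add_sub_cancel_left]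
  conv_rhs => rw [← Real.mul_self_sqrt (Nat.cast_nonneg m)]
  linear_combination (η * G * ⟪x, xt⟫ * b / (√m * √m)) * ha2

open Classical in
theorem sgd_step_prediction_sandwich_general (m d : ℕ)
    (W : Fin m → EuclideanSpace ℝ (Fin d)) (a : Fin m → ℝ)
    (ha : ∀ i, a i = 1 ∨ a i = -1)
    (xt : EuclideanSpace ℝ (Fin d)) (η : ℝ) (G : ℝ)
    (W' : Fin m → EuclideanSpace ℝ (Fin d))
    (hW' : ∀ j, W' j =
      W j + ((η * a j / Real.sqrt m) * G * (if 0 ≤ ⟪W j, xt⟫ then (1 : ℝ) else 0)) • xt)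
    (A B : Finset (Fin m))
    (hA : A = Finset.univ.filter fun j => a j = 1)
    (hB : B = Finset.univ.filter fun j => a j = -1)
    (L M : EuclideanSpace ℝ (Fin d) → EuclideanSpace ℝ (Fin d) → ℝ)
    (hL : ∀ x y, L x y = ((1 : ℝ) / m) * ⟪x, y⟫ *
      ∑ j ∈ A, (if 0 ≤ ⟪W j, y⟫ then (1 : ℝ) else 0) *
        ((if 0 ≤ ⟪W' j, x⟫ then (1 : ℝ) else 0) - (if 0 ≤ ⟪W j, x⟫ then (1 : ℝ) else 0)))
    (hM : ∀ x y, M x y = ((1 : ℝ) / m) * ⟪x, y⟫ *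
      ∑ j ∈ B, (if 0 ≤ ⟪W j, y⟫ then (1 : ℝ) else 0) *
        ((if 0 ≤ ⟪W' j, x⟫ then (1 : ℝ) else 0) - (if 0 ≤ ⟪W j, x⟫ then (1 : ℝ) else 0))) :
    ∀ x : EuclideanSpace ℝ (Fin d),
      η * (empKernel m d W x xt + M x xt) * G ≤
          twoLayer m d a W' x - twoLayer m d a W x ∧
        twoLayer m d a W' x - twoLayer m d a W x ≤
          η * (empKernel m d W x xt + L x xt) * G := by
  intro x
  have hchange (j : Fin m) :
      a j / √m * (⟪W' j, x⟫ - ⟪W j, x⟫) = η * G / m * ⟪x, xt⟫ * 𝟙₊(⟪W j, xt⟫) :=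
    div_sqrt_mul_inner_sub_of_eq_add_smul (ha j) (hW' j)
  have hK : ∑ j, a j / √m * (⟪W' j, x⟫ - ⟪W j, x⟫) * 𝟙₊(⟪W j, x⟫) =
      η * empKernel m d W x xt * G := by
    simp_rw [hchange, empKernel, mul_sum, sum_mul]
    exact sum_congr rfl fun j _ => by ring
  have hLsum : ∑ j ∈ A, a j / √m * (⟪W' j, x⟫ - ⟪W j, x⟫) * (𝟙₊(⟪W' j, x⟫) - 𝟙₊(⟪W j, x⟫)) =
      η * L x xt * G := by
    simp_rw [hchange, hL, mul_sum, sum_mul]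
    exact sum_congr rfl fun j _ => by ring
  have hMsum : ∑ j ∈ B, a j / √m * (⟪W' j, x⟫ - ⟪W j, x⟫) * (𝟙₊(⟪W' j, x⟫) - 𝟙₊(⟪W j, x⟫)) =
      η * M x xt * G := by
    simp_rw [hchange, hM, mul_sum, sum_mul]
    exact sum_congr rfl fun j _ => by ring
  have hpos (j : Fin m) (h : a j = 1) : 0 ≤ a j / √m := by rw [h]; positivity
  have hneg (j : Fin m) (h : a j = -1) : a j / √m ≤ 0 := by
    rw [h]; exact div_nonpos_of_nonpos_of_nonneg (by norm_num) (Real.sqrt_nonneg _)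
  have hup := sum_mul_mul_step_sub_step_le (fun j => a j / √m) (fun j => ⟪W j, x⟫)
    (fun j => ⟪W' j, x⟫) A (fun j hj => hpos j (by simpa [hA] using hj))
    (fun j hj => hneg j ((ha j).resolve_left (by simpa [hA] using hj)))
  have hlow := le_sum_mul_mul_step_sub_step (fun j => a j / √m) (fun j => ⟪W j, x⟫)
    (fun j => ⟪W' j, x⟫) B (fun j hj => hneg j (by simpa [hB] using hj))
    (fun j hj => hpos j ((ha j).resolve_right (by simpa [hB] using hj)))
  rw [twoLayer_sub_twoLayer]
  constructor <;> linarith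

open Classical in
/-- One SGD step changes the network predictions by an amount sandwiched between
`η (H_W(x, x_t) + M(x, x_t)) G` and `η (H_W(x, x_t) + L(x, x_t)) G`. -/
theorem sgd_step_prediction_sandwich (m d : ℕ) (hm : 1 ≤ m) (hd : 1 ≤ d)
    (W : Fin m → EuclideanSpace ℝ (Fin d)) (a : Fin m → ℝ)
    (ha : ∀ i, a i = 1 ∨ a i = -1)
    (xt : EuclideanSpace ℝ (Fin d)) (η : ℝ) (hη : 0 ≤ η) (G : ℝ)
    (W' : Fin m → EuclideanSpace ℝ (Fin d))
    (hW' : ∀ j, W' j =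
      W j + ((η * a j / Real.sqrt m) * G * (if 0 ≤ ⟪W j, xt⟫ then (1 : ℝ) else 0)) • xt)
    (A B : Finset (Fin m))
    (hA : A = Finset.univ.filter fun j => a j = 1)
    (hB : B = Finset.univ.filter fun j => a j = -1)
    (L M : EuclideanSpace ℝ (Fin d) → EuclideanSpace ℝ (Fin d) → ℝ)
    (hL : ∀ x y, L x y = ((1 : ℝ) / m) * ⟪x, y⟫ *
      ∑ j ∈ A, (if 0 ≤ ⟪W j, y⟫ then (1 : ℝ) else 0) *
        ((if 0 ≤ ⟪W' j, x⟫ then (1 : ℝ) else 0) - (if 0 ≤ ⟪W j, x⟫ then (1 : ℝ) else 0)))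
    (hM : ∀ x y, M x y = ((1 : ℝ) / m) * ⟪x, y⟫ *
      ∑ j ∈ B, (if 0 ≤ ⟪W j, y⟫ then (1 : ℝ) else 0) *
        ((if 0 ≤ ⟪W' j, x⟫ then (1 : ℝ) else 0) - (if 0 ≤ ⟪W j, x⟫ then (1 : ℝ) else 0))) :
    ∀ x : EuclideanSpace ℝ (Fin d),
      η * (empKernel m d W x xt + M x xt) * G ≤
          twoLayer m d a W' x - twoLayer m d a W x ∧
        twoLayer m d a W' x - twoLayer m d a W x ≤
          η * (empKernel m d W x xt + L x xt) * G :=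
  sgd_step_prediction_sandwich_general m d W a ha xt η G W' hW' A B hA hB L M hL hM
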